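/- There exists a constant C' > 0 such that for every real n > 0 and every ℝ-word w over X = {a, b} with coarse length k(w) ≥ 2 whose evaluation equals gₙ = ((n, 0), 0, 0), one has ℓ(w) − n ≥ C' · k(w)^{−2/3} · n. -/

import Mathlib

noncomputable section

/-- The Engel Lie group `Ē`: underlying set `ℝ² × ℝ × ℝ`, with coordinates
`(x, y)` (endpoint), `A` (signed area) and `B` (the `y`-moment). -/
@[ext]
structure Engel where
  x : ℝ
  y : ℝ
  A : ℝ
  B : ℝ

namespace Engel

instance : Mul Engel :=
  ⟨fun g h =>
    ⟨g.x + h.x, g.y + h.y,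
     g.A + h.A + (g.x * h.y - g.y * h.x) / 2,
     g.B + h.B + g.y * h.A + (2 * g.y + h.y) * (g.x * h.y - g.y * h.x) / 6⟩⟩

instance : One Engel := ⟨⟨0, 0, 0, 0⟩⟩

instance : Inv Engel := ⟨fun g => ⟨-g.x, -g.y, -g.A, -g.B + g.y * g.A⟩⟩

@[simp] lemma mul_x (g h : Engel) : (g * h).x = g.x + h.x := rfl
@[simp] lemma mul_y (g h : Engel) : (g * h).y = g.y + h.y := rfl
@[simp] lemma mul_A (g h : Engel) :
    (g * h).A = g.A + h.A + (g.x * h.y - g.y * h.x) / 2 := rfl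
@[simp] lemma mul_B (g h : Engel) :
    (g * h).B = g.B + h.B + g.y * h.A
      + (2 * g.y + h.y) * (g.x * h.y - g.y * h.x) / 6 := rfl
@[simp] lemma one_x : (1 : Engel).x = 0 := rfl
@[simp] lemma one_y : (1 : Engel).y = 0 := rfl
@[simp] lemma one_A : (1 : Engel).A = 0 := rfl
@[simp] lemma one_B : (1 : Engel).B = 0 := rfl
@[simp] lemma inv_x (g : Engel) : g⁻¹.x = -g.x := rfl
@[simp] lemma inv_y (g : Engel) : g⁻¹.y = -g.y := rfl
@[simp] lemma inv_A (g : Engel) : g⁻¹.A = -g.A := rfl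
@[simp] lemma inv_B (g : Engel) : g⁻¹.B = -g.B + g.y * g.A := rfl

instance : Group Engel where
  mul_assoc a b c := by ext <;> simp <;> ring
  one_mul a := by ext <;> simp
  mul_one a := by ext <;> simp
  inv_mul_cancel a := by
    ext <;>
      simp only [mul_x, mul_y, mul_A, mul_B, inv_x, inv_y, inv_A, inv_B,
        one_x, one_y, one_A, one_B] <;> ring

/-- `a^t`: the straight segment from `(0,0)` to `(t,t)`. -/
def aPow (t : ℝ) : Engel := ⟨t, t, 0, 0⟩

/-- `b^t`: the straight segment from `(0,0)` to `(t,-t)`. -/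
def bPow (t : ℝ) : Engel := ⟨t, -t, 0, 0⟩

end Engel

namespace Engel

/-- An ℝ-word over `X = {a, b}` is a finite sequence of pairs `(xᵢ, tᵢ)` with
`xᵢ ∈ {a, b}` (encoded as `Bool`: `true ↦ a`, `false ↦ b`) and `tᵢ ∈ ℝ`.
Its evaluation is the product `x₁^{t₁}·…·x_k^{t_k}` in `Ē`. -/
def wordEval (w : List (Bool × ℝ)) : Engel :=
  (w.map fun p => if p.1 then aPow p.2 else bPow p.2).prod

/-- The length `ℓ(w) = Σᵢ |tᵢ|` of an ℝ-word. -/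
def wordLen (w : List (Bool × ℝ)) : ℝ := (w.map fun p => |p.2|).sum

end Engel

namespace Engel

/-! An ℝ-word is a polygonal path in the plane with slopes `±1`: the letter `(xᵢ, tᵢ)` moves
by `tᵢ` horizontally and by `rise (xᵢ, tᵢ) = ±tᵢ` vertically. The `B`-coordinate of the
evaluation is `x y² / 6 - ½ ∫ y² dx`, so a word evaluating to `gₙ` is a path from `(0, 0)` to
`(n, 0)` with `∫ y² dx = 0`. Hence `T = ∫ y² |dx| = ∫ y² (|dx| - dx) ≤ ε h²`, where
`ε = ℓ(w) - n = ∫ (|dx| - dx)` and `h` is the maximal height. Since `|dy| = |dx|`, climbing to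
height `h` and coming back costs `T ≥ 2 h³ / 3`. Finally each segment contributes at least
`|tᵢ|³ / 12`, so by the power mean inequality `T ≥ ℓ(w)³ / (12 k²)`. The first two bounds give
`T ≤ 9 ε³ / 4`, hence `ε³ ≥ n³ / (27 k²)`. -/

def letter (p : Bool × ℝ) : Engel := if p.1 then aPow p.2 else bPow p.2

def rise (p : Bool × ℝ) : ℝ := if p.1 then p.2 else -p.2

@[simp] lemma letter_x (p : Bool × ℝ) : (letter p).x = p.2 := by
  unfold letter; split <;> rfl

@[simp] lemma letter_y (p : Bool × ℝ) : (letter p).y = rise p := by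
  unfold letter rise; split <;> rfl

@[simp] lemma letter_A (p : Bool × ℝ) : (letter p).A = 0 := by
  unfold letter; split <;> rfl

@[simp] lemma letter_B (p : Bool × ℝ) : (letter p).B = 0 := by
  unfold letter; split <;> rfl

lemma abs_rise (p : Bool × ℝ) : |rise p| = |p.2| := by
  unfold rise; split <;> simp

lemma wordEval_eq_prod_map_letter (w : List (Bool × ℝ)) : wordEval w = (w.map letter).prod :=
  rfl

lemma wordEval_cons (p : Bool × ℝ) (w : List (Bool × ℝ)) :
    wordEval (p :: w) = letter p * wordEval w :=
  rfl

lemma wordEval_append_singleton (w : List (Bool × ℝ)) (p : Bool × ℝ) :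
    wordEval (w ++ [p]) = wordEval w * letter p := by
  simp [wordEval_eq_prod_map_letter]

@[simp] lemma wordEval_x (w : List (Bool × ℝ)) : (wordEval w).x = (w.map Prod.snd).sum := by
  induction w with
  | nil => rfl
  | cons p w ih => simp [wordEval_cons, ih]

@[simp] lemma wordEval_y (w : List (Bool × ℝ)) : (wordEval w).y = (w.map rise).sum := by
  induction w with
  | nil => rfl
  | cons p w ih => simp [wordEval_cons, ih]

lemma sum_map_snd_le_wordLen (w : List (Bool × ℝ)) : (w.map Prod.snd).sum ≤ wordLen w := by
  rw [wordLen, ← Fin.sum_univ_fun_getElem, ← Fin.sum_univ_fun_getElem]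
  exact Finset.sum_le_sum fun _ _ => le_abs_self _

lemma wordLen_pow_three_le (w : List (Bool × ℝ)) :
    wordLen w ^ 3 ≤ (w.length : ℝ) ^ 2 * (w.map fun p => |p.2| ^ 3).sum := by
  rw [wordLen, ← Fin.sum_univ_fun_getElem, ← Fin.sum_univ_fun_getElem]
  simpa using pow_sum_le_card_mul_sum_pow (s := Finset.univ)
    (f := fun i : Fin w.length => |w[i].2|) (fun _ _ => abs_nonneg _) 2

/-- The mean value of `s²` over the segment between `y` and `z`. -/
def meanSq (y z : ℝ) : ℝ := (y ^ 2 + y * z + z ^ 2) / 3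

lemma sq_sub_div_twelve_le_meanSq (y z : ℝ) : (z - y) ^ 2 / 12 ≤ meanSq y z := by
  unfold meanSq; nlinarith [sq_nonneg (y + z)]

lemma meanSq_le_sq {y z M : ℝ} (hy : |y| ≤ M) (hz : |z| ≤ M) : meanSq y z ≤ M ^ 2 := by
  have hyz : y * z ≤ M ^ 2 :=
    calc y * z ≤ |y| * |z| := by rw [← abs_mul]; exact le_abs_self _
      _ ≤ M * M := mul_le_mul hy hz (abs_nonneg z) ((abs_nonneg y).trans hy)
      _ = M ^ 2 := (sq M).symm
  have hy2 : y ^ 2 ≤ M ^ 2 := sq_le_sq' (abs_le.mp hy).1 (abs_le.mp hy).2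
  have hz2 : z ^ 2 ≤ M ^ 2 := sq_le_sq' (abs_le.mp hz).1 (abs_le.mp hz).2
  unfold meanSq
  linarith

lemma abs_sub_mul_meanSq (y z : ℝ) : |z - y| * meanSq y z = |z ^ 3 - y ^ 3| / 3 := by
  have hmean : 0 ≤ y ^ 2 + y * z + z ^ 2 := by nlinarith [sq_nonneg (y + z), sq_nonneg (y - z)]
  rw [meanSq, show z ^ 3 - y ^ 3 = (z - y) * (y ^ 2 + y * z + z ^ 2) by ring, abs_mul,
    abs_of_nonneg hmean, mul_div_assoc]

lemma abs_sub_abs_pow_three_div_three_le (y z : ℝ) :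
    |(|z| ^ 3 - |y| ^ 3)| / 3 ≤ |z - y| * meanSq y z := by
  rw [abs_sub_mul_meanSq, ← abs_pow, ← abs_pow]
  exact div_le_div_of_nonneg_right (abs_abs_sub_abs_le_abs_sub _ _) (by norm_num)

/-- `∫ s² dx` along the path of `w` started at height `y`. -/
def sqIntegral (y : ℝ) : List (Bool × ℝ) → ℝ
  | [] => 0
  | p :: w => p.2 * meanSq y (y + rise p) + sqIntegral (y + rise p) w

/-- `∫ s² |dx|` along the path of `w` started at height `y`. -/
def absSqIntegral (y : ℝ) : List (Bool × ℝ) → ℝ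
  | [] => 0
  | p :: w => |p.2| * meanSq y (y + rise p) + absSqIntegral (y + rise p) w

def maxHeight (y : ℝ) : List (Bool × ℝ) → ℝ
  | [] => |y|
  | p :: w => max |y| (maxHeight (y + rise p) w)

lemma abs_le_maxHeight (y : ℝ) (w : List (Bool × ℝ)) : |y| ≤ maxHeight y w := by
  cases w with
  | nil => exact le_rfl
  | cons p w => exact le_max_left _ _

lemma sqIntegral_append_singleton (w : List (Bool × ℝ)) (p : Bool × ℝ) (y : ℝ) :
    sqIntegral y (w ++ [p]) = sqIntegral y w
      + p.2 * meanSq (y + (w.map rise).sum) (y + (w.map rise).sum + rise p) := by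
  induction w generalizing y with
  | nil => simp [sqIntegral]
  | cons q w ih => simp only [List.cons_append, sqIntegral, ih, List.map_cons, List.sum_cons,
      add_assoc]

lemma wordEval_B (w : List (Bool × ℝ)) :
    (wordEval w).B = (wordEval w).x * (wordEval w).y ^ 2 / 6 - sqIntegral 0 w / 2 := by
  induction w using List.reverseRecOn with
  | nil => simp [sqIntegral, wordEval_eq_prod_map_letter]
  | append_singleton w p ih =>
    simp only [wordEval_append_singleton, mul_B, mul_x, mul_y, letter_x, letter_y, letter_A,
      letter_B, sqIntegral_append_singleton, ih, wordEval_y, meanSq]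
    ring

lemma absSqIntegral_sub_sqIntegral_le (w : List (Bool × ℝ)) {y M : ℝ}
    (hM : maxHeight y w ≤ M) :
    absSqIntegral y w - sqIntegral y w ≤ (wordLen w - (w.map Prod.snd).sum) * M ^ 2 := by
  induction w generalizing y with
  | nil => simp [absSqIntegral, sqIntegral, wordLen]
  | cons p w ih =>
    have hyM : |y| ≤ M := (le_max_left _ _).trans hM
    have hwM : maxHeight (y + rise p) w ≤ M := (le_max_right _ _).trans hM
    have hsegment : (|p.2| - p.2) * meanSq y (y + rise p) ≤ (|p.2| - p.2) * M ^ 2 :=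
      mul_le_mul_of_nonneg_left (meanSq_le_sq hyM ((abs_le_maxHeight _ w).trans hwM))
        (sub_nonneg.mpr (le_abs_self _))
    simp only [absSqIntegral, sqIntegral, wordLen, List.map_cons, List.sum_cons] at ih ⊢
    linarith [ih hwM]

lemma sum_abs_pow_three_div_twelve_le_absSqIntegral (w : List (Bool × ℝ)) (y : ℝ) :
    (w.map fun p => |p.2| ^ 3).sum / 12 ≤ absSqIntegral y w := by
  induction w generalizing y with
  | nil => simp [absSqIntegral]
  | cons p w ih =>
    have hsegment : |p.2| ^ 3 / 12 ≤ |p.2| * meanSq y (y + rise p) := by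
      have := sq_sub_div_twelve_le_meanSq y (y + rise p)
      rw [add_sub_cancel_left, ← sq_abs, abs_rise] at this
      rw [pow_succ', mul_div_assoc]
      exact mul_le_mul_of_nonneg_left this (abs_nonneg _)
    simp only [absSqIntegral, List.map_cons, List.sum_cons]
    linarith [ih (y + rise p)]

/-- The path climbs from `|y|` to its maximal height and then descends to its final height. -/
lemma maxHeight_pow_three_le_absSqIntegral (w : List (Bool × ℝ)) (y : ℝ) :
    (2 * maxHeight y w ^ 3 - |y| ^ 3 - |y + (w.map rise).sum| ^ 3) / 3
      ≤ absSqIntegral y w := by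
  induction w generalizing y with
  | nil =>
    simp only [maxHeight, absSqIntegral, List.map_nil, List.sum_nil, add_zero]
    linarith
  | cons p w ih =>
    set z := y + rise p
    have hsegment : |(|z| ^ 3 - |y| ^ 3)| / 3 ≤ |p.2| * meanSq y z := by
      rw [← abs_rise, show rise p = z - y by ring]
      exact abs_sub_abs_pow_three_div_three_le y z
    have hz : |z| ^ 3 ≤ maxHeight z w ^ 3 := by gcongr; exact abs_le_maxHeight z w
    have := ih z
    simp only [maxHeight, absSqIntegral, List.map_cons, List.sum_cons, ← add_assoc] at this ⊢
    rcases le_total |y| (maxHeight z w) with h | h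
    · rw [max_eq_right h]; linarith [le_abs_self (|z| ^ 3 - |y| ^ 3)]
    · rw [max_eq_left h]; linarith [neg_abs_le (|z| ^ 3 - |y| ^ 3)]

lemma sqIntegral_eq_zero_of_wordEval_eq {w : List (Bool × ℝ)} {n : ℝ}
    (hw : wordEval w = ⟨n, 0, 0, 0⟩) : sqIntegral 0 w = 0 := by
  have := wordEval_B w
  rw [hw] at this
  linarith

lemma four_mul_div_nine_le_pow_three {T ε h : ℝ} (hε : 0 ≤ ε) (hh : 0 ≤ h) (hTε : T ≤ ε * h ^ 2)
    (hTh : 2 * h ^ 3 / 3 ≤ T) : 4 * T / 9 ≤ ε ^ 3 := by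
  have hT0 : 0 ≤ T := (by positivity : (0 : ℝ) ≤ 2 * h ^ 3 / 3).trans hTh
  rcases hT0.eq_or_lt with rfl | hT
  · simpa using pow_nonneg hε 3
  have hsq : (h ^ 3) ^ 2 ≤ (3 / 2 * T) ^ 2 := by gcongr; linarith
  have hcube : T * T ^ 2 ≤ 9 / 4 * ε ^ 3 * T ^ 2 :=
    calc T * T ^ 2 = T ^ 3 := by ring
      _ ≤ (ε * h ^ 2) ^ 3 := by gcongr
      _ = ε ^ 3 * (h ^ 3) ^ 2 := by ring
      _ ≤ ε ^ 3 * (3 / 2 * T) ^ 2 := by gcongr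
      _ = 9 / 4 * ε ^ 3 * T ^ 2 := by ring
  linarith [le_of_mul_le_mul_right hcube (by positivity)]

lemma mul_rpow_neg_two_thirds_le {k n ε : ℝ} (hk : 0 < k) (hε : 0 ≤ ε)
    (h : n ^ 3 ≤ 27 * k ^ 2 * ε ^ 3) : 1 / 3 * k ^ (-(2 / 3) : ℝ) * n ≤ ε := by
  have hpow : (k ^ (-(2 / 3) : ℝ)) ^ 3 = (k ^ 2)⁻¹ := by
    rw [← Real.rpow_natCast, ← Real.rpow_mul hk.le, ← Real.rpow_two, ← Real.rpow_neg hk.le]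
    norm_num
  refine le_of_pow_le_pow_left₀ three_ne_zero hε ?_
  rw [mul_pow, mul_pow, hpow]
  field_simp
  linarith

/-- There exists `C' > 0` such that for every real `n > 0` and every ℝ-word `w`
over `X = {a, b}` with coarse length `k(w) ≥ 2` whose evaluation equals
`gₙ = ((n, 0), 0, 0)`, one has `ℓ(w) − n ≥ C' · k(w)^{−2/3} · n`. -/
theorem length_excess_lower_bound :
    ∃ C' : ℝ, 0 < C' ∧ ∀ n : ℝ, 0 < n → ∀ w : List (Bool × ℝ), 2 ≤ w.length →
      wordEval w = ⟨n, 0, 0, 0⟩ →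
      wordLen w - n ≥ C' * (w.length : ℝ) ^ (-(2 / 3) : ℝ) * n := by
  refine ⟨1 / 3, by norm_num, fun n hn w hk hw => ?_⟩
  have hx : (w.map Prod.snd).sum = n := by rw [← wordEval_x, hw]
  have hy : (w.map rise).sum = 0 := by rw [← wordEval_y, hw]
  have hnℓ : n ≤ wordLen w := hx ▸ sum_map_snd_le_wordLen w
  have hTε : absSqIntegral 0 w ≤ (wordLen w - n) * maxHeight 0 w ^ 2 := by
    have := absSqIntegral_sub_sqIntegral_le w (le_refl (maxHeight 0 w))
    rwa [sqIntegral_eq_zero_of_wordEval_eq hw, hx, sub_zero] at this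
  have hTh : 2 * maxHeight 0 w ^ 3 / 3 ≤ absSqIntegral 0 w := by
    simpa [hy] using maxHeight_pow_three_le_absSqIntegral w 0
  have hTn : n ^ 3 ≤ 12 * (w.length : ℝ) ^ 2 * absSqIntegral 0 w := by
    nlinarith [pow_le_pow_left₀ hn.le hnℓ 3, wordLen_pow_three_le w,
      sum_abs_pow_three_div_twelve_le_absSqIntegral w 0]
  have hTε' := four_mul_div_nine_le_pow_three (sub_nonneg.mpr hnℓ)
    ((abs_nonneg _).trans (abs_le_maxHeight 0 w)) hTε hTh
  refine mul_rpow_neg_two_thirds_le (Nat.cast_pos.mpr (by omega)) (sub_nonneg.mpr hnℓ) ?_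
  nlinarith

end Engel
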